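/- arXiv:1904.05653 — 2 statements merged into one kernel-verified Lean document; each statement's English description precedes it below -/
import Mathlib

section
/- ⟨η₁| z^h (a⁺)^j k^m w^h |η₁⟩ = z^j (-q;q)_j · (-q^{j+m+1} z w; q)_∞ / (q^m z w; q)_∞, where ⟨η₁| = Σ_{m≥0} ⟨m|/(q;q)_m, |η₁⟩ = Σ_{m≥0} |m⟩/(q;q)_m, and the pairing is ⟨m|m'⟩ = δ_{m,m'}(q²;q²)_m. -/
open Complex

noncomputable section

/-- `a⁺|m⟩ = |m+1⟩`. -/
def aP : (ℕ → ℂ) → (ℕ → ℂ) := fun f n => if n = 0 then 0 else f (n - 1)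

/-- `k|m⟩ = q^m|m⟩`. -/
def kk (q : ℂ) : (ℕ → ℂ) → (ℕ → ℂ) := fun f n => q ^ n * f n

/-- `z^h|m⟩ = z^m|m⟩`. -/
def zh (z : ℂ) : (ℕ → ℂ) → (ℕ → ℂ) := fun f n => z ^ n * f n

/-- q-Pochhammer symbol `(x;q)_m` specialized: `qpoch x m = ∏_{j=1}^m (1 - x^j)`. -/
def qpoch (x : ℂ) (m : ℕ) : ℂ := ∏ j ∈ Finset.range m, (1 - x ^ (j + 1))

/-- `(-q;q)_j = ∏_{i=1}^j (1 + q^i)`. -/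
def negqpoch (q : ℂ) (j : ℕ) : ℂ := ∏ i ∈ Finset.range j, (1 + q ^ (i + 1))

/-- infinite q-Pochhammer symbol `(x;q)_∞ = ∏_{i≥0} (1 - x q^i)`. -/
def qpochInf (x q : ℂ) : ℂ := ∏' i : ℕ, (1 - x * q ^ i)

/-- coefficients of `|η₁⟩ = Σ_{m≥0}|m⟩/(q;q)_m`. -/
def eta1 (q : ℂ) : ℕ → ℂ := fun m => (qpoch q m)⁻¹

/-!
Since `(q²;q²)_l / (q;q)_l = (-q;q)_l`, the summand vanishes for `l < j` and at `l = n + j` equals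
`z^j (-q;q)_j · (a;q)_n / (q;q)_n · x^n` with `a = -q^{j+1}` and `x = q^m z w`. The sum is then the
`q`-binomial theorem `∑ (a;q)_n / (q;q)_n x^n = (ax;q)_∞ / (x;q)_∞`. Its series `S` satisfies
`(1 - x) S(x) = (1 - a x) S(q x)` (the coefficients obey `c_{n+1} (1 - q^{n+1}) = c_n (1 - a q^n)`);
iterating gives `(x;q)_N S(x) = (ax;q)_N S(q^N x)`, and `S(q^N x) → S(0) = 1` by dominated convergence.
-/

open Filter Finset Topology

def qPoch (a q : ℂ) (n : ℕ) : ℂ := ∏ i ∈ range n, (1 - a * q ^ i)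

lemma qPoch_succ (a q : ℂ) (n : ℕ) : qPoch a q (n + 1) = qPoch a q n * (1 - a * q ^ n) :=
  prod_range_succ _ _

lemma norm_mul_lt_one {q x : ℂ} (hq : ‖q‖ ≤ 1) (hx : ‖x‖ < 1) : ‖q * x‖ < 1 := by
  rw [norm_mul]
  exact (mul_le_of_le_one_left (norm_nonneg x) hq).trans_lt hx

lemma norm_pow_mul_lt_one {q x : ℂ} (hq : ‖q‖ ≤ 1) (hx : ‖x‖ < 1) (N : ℕ) : ‖q ^ N * x‖ < 1 :=
  norm_mul_lt_one (by rw [norm_pow]; exact pow_le_one₀ (norm_nonneg q) hq) hx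

lemma one_sub_mul_pow_ne_zero {x q : ℂ} (hx : ‖x‖ < 1) (hq : ‖q‖ ≤ 1) (i : ℕ) :
    1 - x * q ^ i ≠ 0 := by
  have hlt := norm_pow_mul_lt_one hq hx i
  rw [mul_comm] at hlt
  intro h
  rw [sub_eq_zero] at h
  simp [← h] at hlt

lemma qPoch_self_ne_zero {q : ℂ} (hq : ‖q‖ < 1) (n : ℕ) : qPoch q q n ≠ 0 :=
  prod_ne_zero_iff.2 fun i _ ↦ one_sub_mul_pow_ne_zero hq hq.le i

def qBinomCoeff (a q : ℂ) (n : ℕ) : ℂ := qPoch a q n / qPoch q q n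

lemma qBinomCoeff_zero (a q : ℂ) : qBinomCoeff a q 0 = 1 := by
  simp [qBinomCoeff, qPoch]

lemma qBinomCoeff_succ_mul {q : ℂ} (hq : ‖q‖ < 1) (a : ℂ) (n : ℕ) :
    qBinomCoeff a q (n + 1) * (1 - q * q ^ n) = qBinomCoeff a q n * (1 - a * q ^ n) := by
  rw [qBinomCoeff, qBinomCoeff, qPoch_succ, qPoch_succ, mul_div_mul_comm, mul_assoc,
    div_mul_cancel₀ _ (one_sub_mul_pow_ne_zero hq hq.le n)]

lemma summable_norm_qBinomCoeff_mul_pow {q x : ℂ} (hq : ‖q‖ < 1) (hx : ‖x‖ < 1) (a : ℂ) :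
    Summable fun n ↦ ‖qBinomCoeff a q n * x ^ n‖ := by
  set ρ : ℕ → ℝ := fun n ↦ ‖1 - a * q ^ n‖ / ‖1 - q * q ^ n‖ * ‖x‖
  have hρ : Tendsto ρ atTop (𝓝 ‖x‖) := by
    have hpow := tendsto_pow_atTop_nhds_zero_of_norm_lt_one hq
    have hnum := (tendsto_const_nhds (x := (1 : ℂ))).sub (hpow.const_mul a)
    have hden := (tendsto_const_nhds (x := (1 : ℂ))).sub (hpow.const_mul q)
    simpa using ((hnum.norm.div hden.norm (by simp)).mul_const ‖x‖)
  refine summable_of_ratio_norm_eventually_le (r := (1 + ‖x‖) / 2) (by linarith) ?_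
  filter_upwards [hρ.eventually (ge_mem_nhds (show ‖x‖ < (1 + ‖x‖) / 2 by linarith))] with n hn
  have hrec := congrArg norm (qBinomCoeff_succ_mul hq a n)
  have hden : 0 < ‖1 - q * q ^ n‖ := norm_pos_iff.2 (one_sub_mul_pow_ne_zero hq hq.le n)
  rw [norm_mul, norm_mul, ← eq_div_iff hden.ne'] at hrec
  calc ‖‖qBinomCoeff a q (n + 1) * x ^ (n + 1)‖‖
      = ρ n * ‖qBinomCoeff a q n * x ^ n‖ := by
        rw [norm_norm, norm_mul, norm_mul, norm_pow, norm_pow, hrec]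
        simp only [ρ]
        ring
    _ ≤ (1 + ‖x‖) / 2 * ‖‖qBinomCoeff a q n * x ^ n‖‖ := by
        rw [norm_norm]; exact mul_le_mul_of_nonneg_right hn (norm_nonneg _)

def qBinomSeries (a q x : ℂ) : ℂ := ∑' n, qBinomCoeff a q n * x ^ n

lemma qBinomSeries_functional_eq {q x : ℂ} (hq : ‖q‖ < 1) (hx : ‖x‖ < 1) (a : ℂ) :
    (1 - x) * qBinomSeries a q x = (1 - a * x) * qBinomSeries a q (q * x) := by
  set c := qBinomCoeff a q
  have hS : ∀ {y : ℂ}, ‖y‖ < 1 → HasSum (fun n ↦ c n * y ^ n) (qBinomSeries a q y) :=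
    fun hy ↦ (summable_norm_qBinomCoeff_mul_pow hq hy a).of_norm.hasSum
  have hSx := hS hx
  have hSqx := hS (norm_mul_lt_one hq.le hx)
  -- compare the coefficients of `x ^ (n + 1)` in `S x - S (q x) = x S x - a x S (q x)`
  have hdiff : HasSum (fun n ↦ c (n + 1) * (1 - q * q ^ n) * x ^ (n + 1))
      (qBinomSeries a q x - qBinomSeries a q (q * x)) := by
    have h := (hasSum_nat_add_iff' 1).2 (hSx.sub hSqx)
    simp only [range_one, sum_singleton, pow_zero, sub_self, sub_zero] at h
    exact h.congr_fun fun n ↦ by ring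
  have hmul : HasSum (fun n ↦ c n * (1 - a * q ^ n) * x ^ (n + 1))
      (x * qBinomSeries a q x - a * x * qBinomSeries a q (q * x)) :=
    ((hSx.mul_left x).sub (hSqx.mul_left (a * x))).congr_fun fun n ↦ by ring
  have := hdiff.unique (hmul.congr_fun fun n ↦ by rw [qBinomCoeff_succ_mul hq])
  linear_combination this

lemma qPoch_mul_qBinomSeries {q x : ℂ} (hq : ‖q‖ < 1) (hx : ‖x‖ < 1) (a : ℂ) (N : ℕ) :
    qPoch x q N * qBinomSeries a q x = qPoch (a * x) q N * qBinomSeries a q (q ^ N * x) := by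
  induction N with
  | zero => simp [qPoch]
  | succ N ih =>
    have h := qBinomSeries_functional_eq hq (norm_pow_mul_lt_one hq.le hx N) a
    rw [qPoch_succ, qPoch_succ, pow_succ', mul_assoc q]
    linear_combination (1 - x * q ^ N) * ih + qPoch (a * x) q N * h

lemma tendsto_qBinomSeries_pow_mul {q x : ℂ} (hq : ‖q‖ < 1) (hx : ‖x‖ < 1) (a : ℂ) :
    Tendsto (fun N ↦ qBinomSeries a q (q ^ N * x)) atTop (𝓝 1) := by
  have hlim : qBinomSeries a q 0 = 1 := by
    rw [qBinomSeries, tsum_eq_single 0 fun n hn ↦ by simp [hn]]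
    simp [qBinomCoeff_zero]
  rw [← hlim]
  refine tendsto_tsum_of_dominated_convergence (summable_norm_qBinomCoeff_mul_pow hq hx a)
    (fun n ↦ ?_) (Eventually.of_forall fun N n ↦ ?_)
  · have := (tendsto_pow_atTop_nhds_zero_of_norm_lt_one hq).mul_const x
    simpa using (this.pow n).const_mul (qBinomCoeff a q n)
  · rw [norm_mul, norm_mul, norm_pow, norm_pow, norm_mul, norm_pow]
    gcongr
    exact mul_le_of_le_one_left (norm_nonneg x) (pow_le_one₀ (norm_nonneg q) hq.le)

lemma summable_norm_neg_mul_pow {q : ℂ} (hq : ‖q‖ < 1) (x : ℂ) :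
    Summable fun i ↦ ‖-(x * q ^ i)‖ := by
  simpa [norm_mul, norm_pow] using (summable_geometric_of_lt_one (norm_nonneg q) hq).mul_left ‖x‖

lemma tendsto_qPoch_qpochInf {q : ℂ} (hq : ‖q‖ < 1) (x : ℂ) :
    Tendsto (qPoch x q) atTop (𝓝 (qpochInf x q)) := by
  have := multipliable_one_add_of_summable (summable_norm_neg_mul_pow hq x)
  simp only [← sub_eq_add_neg] at this
  exact this.tendsto_prod_tprod_nat

lemma qpochInf_ne_zero {q x : ℂ} (hq : ‖q‖ < 1) (hx : ‖x‖ < 1) : qpochInf x q ≠ 0 := by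
  have := tprod_one_add_ne_zero_of_summable
    (fun i ↦ by simpa [← sub_eq_add_neg] using one_sub_mul_pow_ne_zero hx hq.le i)
    (summable_norm_neg_mul_pow hq x)
  simpa [qpochInf, ← sub_eq_add_neg] using this

theorem hasSum_qBinomCoeff_mul_pow {q x : ℂ} (hq : ‖q‖ < 1) (hx : ‖x‖ < 1) (a : ℂ) :
    HasSum (fun n ↦ qBinomCoeff a q n * x ^ n) (qpochInf (a * x) q / qpochInf x q) := by
  have hlim := tendsto_nhds_unique
    (((tendsto_qPoch_qpochInf hq x).mul_const (qBinomSeries a q x)).congr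
      (qPoch_mul_qBinomSeries hq hx a))
    ((tendsto_qPoch_qpochInf hq (a * x)).mul (tendsto_qBinomSeries_pow_mul hq hx a))
  rw [mul_one] at hlim
  rw [← hlim, mul_div_cancel_left₀ _ (qpochInf_ne_zero hq hx)]
  exact (summable_norm_qBinomCoeff_mul_pow hq hx a).of_norm.hasSum

lemma aP_iterate_apply_add (j : ℕ) (f : ℕ → ℂ) (n : ℕ) : aP^[j] f (n + j) = f n := by
  induction j generalizing n with
  | zero => rfl
  | succ j ih =>
    rw [Function.iterate_succ_apply', ← add_assoc, aP, if_neg (by omega), Nat.add_sub_cancel, ih]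

lemma aP_iterate_apply_of_lt {j n : ℕ} (f : ℕ → ℂ) (hn : n < j) : aP^[j] f n = 0 := by
  induction j generalizing n with
  | zero => omega
  | succ j ih =>
    rw [Function.iterate_succ_apply', aP]
    split_ifs with h
    · rfl
    · exact ih (by omega)

lemma kk_iterate_apply (q : ℂ) (m : ℕ) (f : ℕ → ℂ) (n : ℕ) :
    (kk q)^[m] f n = (q ^ m) ^ n * f n := by
  induction m with
  | zero => simp
  | succ m ih => rw [Function.iterate_succ_apply', kk, ih, pow_succ, mul_pow]; ring

lemma qpoch_eq_qPoch (q : ℂ) (n : ℕ) : qpoch q n = qPoch q q n :=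
  prod_congr rfl fun i _ ↦ by rw [pow_succ']

lemma qpoch_sq (q : ℂ) (n : ℕ) : qpoch (q ^ 2) n = qpoch q n * negqpoch q n := by
  rw [qpoch, qpoch, negqpoch, ← prod_mul_distrib]
  exact prod_congr rfl fun i _ ↦ by ring

lemma eta1_mul_qpoch_sq {q : ℂ} (hq : ‖q‖ < 1) (n : ℕ) :
    eta1 q n * qpoch (q ^ 2) n = negqpoch q n := by
  rw [eta1, qpoch_sq, inv_mul_cancel_left₀ (qpoch_eq_qPoch q n ▸ qPoch_self_ne_zero hq n)]

lemma negqpoch_add (q : ℂ) (j n : ℕ) :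
    negqpoch q (j + n) = negqpoch q j * qPoch (-q ^ (j + 1)) q n := by
  rw [negqpoch, prod_range_add, negqpoch, qPoch]
  congr 1
  exact prod_congr rfl fun i _ ↦ by ring

/-- `⟨η₁| z^h (a⁺)^j k^m w^h |η₁⟩
  = z^j (-q;q)_j (-q^{j+m+1}zw;q)_∞ / (q^m zw;q)_∞`,
where the pairing is `⟨m|m'⟩ = δ_{m,m'}(q²;q²)_m`. -/
theorem stmt6 (q z w : ℂ) (j m : ℕ) (hq : ‖q‖ < 1) (hzw : ‖z * w‖ < 1) :
    ∑' l : ℕ, eta1 q l * qpoch (q ^ 2) l *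
        (zh z (aP^[j] ((kk q)^[m] (zh w (eta1 q))))) l
    = z ^ j * negqpoch q j *
        qpochInf (-(q ^ (j + m + 1)) * z * w) q / qpochInf (q ^ m * z * w) q := by
  set x := q ^ m * z * w
  have hx : ‖x‖ < 1 := by
    simpa only [x, mul_assoc] using norm_pow_mul_lt_one hq.le hzw m
  have hshift : HasSum
      (fun n ↦ eta1 q (n + j) * qpoch (q ^ 2) (n + j) *
        (zh z (aP^[j] ((kk q)^[m] (zh w (eta1 q))))) (n + j))
      (z ^ j * negqpoch q j * qpochInf (-(q ^ (j + m + 1)) * z * w) q / qpochInf x q) := by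
    have := (hasSum_qBinomCoeff_mul_pow hq hx (-q ^ (j + 1))).mul_left (z ^ j * negqpoch q j)
    rw [← mul_div_assoc, show -q ^ (j + 1) * x = -(q ^ (j + m + 1)) * z * w by ring] at this
    refine this.congr_fun fun n ↦ ?_
    rw [eta1_mul_qpoch_sq hq, zh, aP_iterate_apply_add, kk_iterate_apply, zh, eta1,
      add_comm n j, negqpoch_add, qBinomCoeff, qpoch_eq_qPoch]
    ring
  refine ((hasSum_nat_add_iff' j).1 ?_).tsum_eq
  rwa [sum_eq_zero fun l hl ↦ ?_, sub_zero]
  rw [zh, aP_iterate_apply_of_lt _ (mem_range.1 hl), mul_zero, mul_zero]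
end
end

section
/- The elements b_i = f_i + β_i k_i^{-1} e_i + γ_i k_i^{-1} of the quantized enveloping algebra U_p satisfy Δ(b_i) = k_i^{-1} ⊗ b_i + (f_i + β_i k_i^{-1} e_i) ⊗ 1 for the coproduct Δ(e_i) = 1⊗e_i + e_i⊗k_i, Δ(f_i) = f_i⊗1 + k_i^{-1}⊗f_i, Δ(k_i^{±1}) = k_i^{±1}⊗k_i^{±1}. Consequently the subalgebra generated by the b_i is a left coideal: Δ(B) ⊆ U_p ⊗ B. -/
open TensorProduct

noncomputable section

/-- The elements `b_i = f_i + β_i k_i⁻¹ e_i + γ_i k_i⁻¹` satisfy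
`Δ(b_i) = k_i⁻¹ ⊗ b_i + (f_i + β_i k_i⁻¹ e_i) ⊗ 1`, and consequently the
subalgebra `B` generated by the `b_i` is a left coideal: `Δ(B) ⊆ H ⊗ B`. -/
theorem stmt10 {H : Type*} [Ring H] [Algebra ℂ H]
    (Δ : H →ₐ[ℂ] H ⊗[ℂ] H) {ι : Type*}
    (e f k kinv : ι → H) (β γ : ι → ℂ)
    (hk : ∀ i, k i * kinv i = 1 ∧ kinv i * k i = 1)
    (hΔe : ∀ i, Δ (e i) = 1 ⊗ₜ[ℂ] e i + e i ⊗ₜ[ℂ] k i)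
    (hΔf : ∀ i, Δ (f i) = f i ⊗ₜ[ℂ] 1 + kinv i ⊗ₜ[ℂ] f i)
    (hΔkinv : ∀ i, Δ (kinv i) = kinv i ⊗ₜ[ℂ] kinv i) :
    (∀ i, Δ (f i + β i • (kinv i * e i) + γ i • kinv i)
        = kinv i ⊗ₜ[ℂ] (f i + β i • (kinv i * e i) + γ i • kinv i)
          + (f i + β i • (kinv i * e i)) ⊗ₜ[ℂ] 1) ∧
    (∀ x ∈ Algebra.adjoin ℂ
        (Set.range fun i => f i + β i • (kinv i * e i) + γ i • kinv i),
      Δ x ∈ LinearMap.range (TensorProduct.map (LinearMap.id : H →ₗ[ℂ] H)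
        (Subalgebra.toSubmodule (Algebra.adjoin ℂ
          (Set.range fun i => f i + β i • (kinv i * e i) + γ i • kinv i))).subtype)) := by

  have key : ∀ i, Δ (f i + β i • (kinv i * e i) + γ i • kinv i)
      = kinv i ⊗ₜ[ℂ] (f i + β i • (kinv i * e i) + γ i • kinv i)
        + (f i + β i • (kinv i * e i)) ⊗ₜ[ℂ] 1 := by
    intro i
    have h1 : Δ (kinv i * e i)
        = kinv i ⊗ₜ[ℂ] (kinv i * e i) + (kinv i * e i) ⊗ₜ[ℂ] 1 := by
      rw [map_mul, hΔkinv, hΔe, mul_add]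
      simp [Algebra.TensorProduct.tmul_mul_tmul, (hk i).2]
    simp only [map_add, map_smul, hΔf, h1, hΔkinv, tmul_add, add_tmul, tmul_smul,
      smul_tmul', smul_add]
    module
  refine ⟨key, ?_⟩
  set B := Algebra.adjoin ℂ
    (Set.range fun i => f i + β i • (kinv i * e i) + γ i • kinv i) with hB
  set F := Algebra.TensorProduct.map (AlgHom.id ℂ H) B.val with hF
  have hFL : TensorProduct.map (LinearMap.id : H →ₗ[ℂ] H)
      (Subalgebra.toSubmodule B).subtype = F.toLinearMap := rfl
  intro x hx
  rw [hFL]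
  have : ∀ y ∈ F.range, y ∈ LinearMap.range F.toLinearMap := fun y hy => hy
  apply this
  induction hx using Algebra.adjoin_induction with
  | mem z hz =>
      obtain ⟨i, rfl⟩ := hz
      rw [key i]
      refine add_mem ⟨kinv i ⊗ₜ[ℂ] ⟨_, Algebra.subset_adjoin ⟨i, rfl⟩⟩, rfl⟩
        ⟨(f i + β i • (kinv i * e i)) ⊗ₜ[ℂ] (1 : B), ?_⟩
      simp [F]
  | algebraMap r =>
      rw [AlgHom.commutes]
      exact Subalgebra.algebraMap_mem _ r
  | add u v hu hv ihu ihv => rw [map_add]; exact add_mem ihu ihv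
  | mul u v hu hv ihu ihv => rw [map_mul]; exact mul_mem ihu ihv
end
end
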